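/- Let P = ℤ^d or ℝ^d with the product order, F a functor from pointwise finite-dimensional persistence modules over P to finite-dimensional K-vector spaces, ε ≥ 0, and suppose (f,g) is an ε⃗-interleaving between pointwise finite-dimensional persistence modules M and N over P. Then for all x ≤ y in P, rk_{M,F}(x−ε⃗, y+ε⃗) ≤ rk_{N,F}(x,y) and rk_{N,F}(x−ε⃗, y+ε⃗) ≤ rk_{M,F}(x,y). -/

import Mathlib

open scoped Classical ENNReal

noncomputable section

/-- A persistence module over a poset `P` with coefficients in a field `K`:
vector spaces `V x` together with structure maps `map : V x →ₗ V y` for `x ≤ y`. -/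
structure PersistenceModule (K : Type) [Field K] (P : Type) [PartialOrder P] where
  V : P → Type
  [acg : ∀ x, AddCommGroup (V x)]
  [mod : ∀ x, Module K (V x)]
  map : ∀ {x y : P}, x ≤ y → (V x →ₗ[K] V y)
  map_refl : ∀ x : P, map (le_refl x) = LinearMap.id
  map_comp : ∀ {x y z : P} (hxy : x ≤ y) (hyz : y ≤ z),
      (map hyz).comp (map hxy) = map (hxy.trans hyz)

attribute [instance] PersistenceModule.acg PersistenceModule.mod

variable {K : Type} [Field K]

section Basic

variable {P : Type} [PartialOrder P]

/-- Pointwise finite-dimensionality. -/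
def PersistenceModule.pfd (M : PersistenceModule K P) : Prop :=
  ∀ x, FiniteDimensional K (M.V x)

/-- A morphism of persistence modules. -/
structure PersistenceHom (M N : PersistenceModule K P) where
  app : ∀ x, M.V x →ₗ[K] N.V x
  naturality : ∀ {x y : P} (h : x ≤ y),
      (app y).comp (M.map h) = (N.map h).comp (app x)

/-- The identity morphism. -/
def PersistenceHom.id (M : PersistenceModule K P) : PersistenceHom M M where
  app _ := LinearMap.id
  naturality _ := by simp

/-- Composition of morphisms of persistence modules. -/
def PersistenceHom.comp {M N L : PersistenceModule K P}
    (g : PersistenceHom N L) (f : PersistenceHom M N) : PersistenceHom M L where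
  app x := (g.app x).comp (f.app x)
  naturality {x y} h := by
    ext v
    have hf := LinearMap.congr_fun (f.naturality h) v
    have hg := LinearMap.congr_fun (g.naturality h) (f.app x v)
    simp only [LinearMap.comp_apply] at hf hg ⊢
    rw [hf, hg]

/-- Two persistence modules are isomorphic iff there is a morphism which is
pointwise bijective. -/
def PersistenceIso (M N : PersistenceModule K P) : Prop :=
  ∃ f : PersistenceHom M N, ∀ x, Function.Bijective (f.app x)

/-- The (pointwise) direct sum of two persistence modules. -/
def PersistenceModule.dsum (M₁ M₂ : PersistenceModule K P) : PersistenceModule K P where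
  V x := M₁.V x × M₂.V x
  map h := (M₁.map h).prodMap (M₂.map h)
  map_refl x := by
    show (M₁.map (le_refl x)).prodMap (M₂.map (le_refl x)) = LinearMap.id
    rw [M₁.map_refl, M₂.map_refl]; rfl
  map_comp hxy hyz := by
    show ((M₁.map hyz).prodMap (M₂.map hyz)).comp ((M₁.map hxy).prodMap (M₂.map hxy)) =
      (M₁.map (hxy.trans hyz)).prodMap (M₂.map (hxy.trans hyz))
    rw [← M₁.map_comp hxy hyz, ← M₂.map_comp hxy hyz]; rfl

/-- The rank of a linear map, as a natural number. -/
noncomputable def lrank {V W : Type} [AddCommGroup V] [Module K V]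
    [AddCommGroup W] [Module K W] (f : V →ₗ[K] W) : ℕ :=
  Module.finrank K (LinearMap.range f)

/-- The classical rank invariant of a persistence module. -/
noncomputable def rankInv (M : PersistenceModule K P) (x y : P) : ℕ∞ :=
  if h : x ≤ y then (lrank (M.map h) : ℕ∞) else ⊤

variable {n : ℕ}

/-- The index set of the restriction `M|_S`: the disjoint union of the slices. -/
abbrev SliceIdx (S : Fin n → Finset P) : Type := Σ i : Fin n, {x // x ∈ S i}

/-- The underlying vector space of the restriction `M|_S = ⊕_{x ∈ S₁ ∪ … ∪ Sₙ} M_x`. -/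
abbrev sliceSpace (M : PersistenceModule K P) (S : Fin n → Finset P) : Type :=
  (p : SliceIdx S) → M.V p.2.1

/-- The nilpotent operator `T_{M,S}` on `M|_S`: its component `M_x → M_y` is the
structure map `M_{yx}` if `x ∈ S_i`, `y ∈ S_{i+1}` and `x ≤ y`, and `0` otherwise. -/
noncomputable def TMap (M : PersistenceModule K P) (S : Fin n → Finset P) :
    sliceSpace M S →ₗ[K] sliceSpace M S :=
  LinearMap.pi fun p => ∑ q : SliceIdx S,
    if h : (q.1 : ℕ) + 1 = (p.1 : ℕ) ∧ q.2.1 ≤ p.2.1 then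
      (M.map h.2).comp (LinearMap.proj q)
    else 0

/-- The restriction `f|_S = ⊕_{x ∈ S} f_x` of a morphism to the slices. -/
noncomputable def sliceHom {M N : PersistenceModule K P} (f : PersistenceHom M N)
    (S : Fin n → Finset P) : sliceSpace M S →ₗ[K] sliceSpace N S :=
  LinearMap.pi fun p => (f.app p.2.1).comp (LinearMap.proj p)

/-- The `i`-th entry of the Jordan type of `M` at `S` (as an integer):
`a_i = rank(T^{i-1}) + rank(T^{i+1}) - 2 rank(T^i)`, the number of `i × i`
Jordan blocks of the nilpotent operator `T_{M,S}`. -/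
noncomputable def jt (M : PersistenceModule K P) (S : Fin n → Finset P) (i : ℕ) : ℤ :=
  (lrank (TMap M S ^ (i - 1)) : ℤ) + (lrank (TMap M S ^ (i + 1)) : ℤ)
    - 2 * (lrank (TMap M S ^ i) : ℤ)

end Basic

section Shifts

variable {P : Type} [AddCommGroup P] [PartialOrder P] [IsOrderedAddMonoid P]

/-- The shift `M[x]` of a persistence module, `(M[x])_z = M_{x+z}`. -/
def PersistenceModule.shift (M : PersistenceModule K P) (x : P) :
    PersistenceModule K P where
  V z := M.V (x + z)
  map h := M.map (add_le_add_right h x)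
  map_refl z := M.map_refl (x + z)
  map_comp hxy hyz := M.map_comp _ _

/-- Shifts preserve pointwise finite-dimensionality. -/
theorem PersistenceModule.pfd.shift {M : PersistenceModule K P} (hM : M.pfd) (x : P) :
    (M.shift x).pfd := fun z => hM (x + z)

/-- The shift `f[x]` of a morphism of persistence modules. -/
def PersistenceHom.shiftHom {M N : PersistenceModule K P} (f : PersistenceHom M N)
    (x : P) : PersistenceHom (M.shift x) (N.shift x) where
  app z := f.app (x + z)
  naturality h := f.naturality (add_le_add_right h x)

/-- The shift morphism `sh_M^ε : M → M[ε]`, with components `M_{z+ε,z}`. -/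
def shMor (M : PersistenceModule K P) (ε : P) (hε : 0 ≤ ε) :
    PersistenceHom M (M.shift ε) where
  app z := M.map (le_add_of_nonneg_left hε)
  naturality {z w} h := by
    show (M.map (le_add_of_nonneg_left hε)).comp (M.map h) =
      (M.map (add_le_add_right h ε)).comp (M.map (le_add_of_nonneg_left hε))
    rw [M.map_comp, M.map_comp]

/-- `(f, g)` form an `ε`-interleaving between `M` and `N`: componentwise,
`g[ε] ∘ f = sh_M^{2ε}` and `f[ε] ∘ g = sh_N^{2ε}`. -/
def IsInterleavingPair {M N : PersistenceModule K P} (ε : P) (hε : 0 ≤ ε)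
    (f : PersistenceHom M (N.shift ε)) (g : PersistenceHom N (M.shift ε)) : Prop :=
  (∀ z : P, (g.app (ε + z)).comp (f.app z) =
    M.map ((le_add_of_nonneg_left hε).trans
      (add_le_add_right (le_add_of_nonneg_left hε) ε))) ∧
  (∀ z : P, (f.app (ε + z)).comp (g.app z) =
    N.map ((le_add_of_nonneg_left hε).trans
      (add_le_add_right (le_add_of_nonneg_left hε) ε)))

/-- There exists an `ε`-interleaving between `M` and `N`. -/
def IsInterleaving (M N : PersistenceModule K P) (ε : P) (hε : 0 ≤ ε) : Prop :=
  ∃ (f : PersistenceHom M (N.shift ε)) (g : PersistenceHom N (M.shift ε)),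
    IsInterleavingPair ε hε f g

variable {n : ℕ}

/-- The map `⊕_{z ∈ S} M_{y+z,x+z} : M[x]|_S → M[y]|_S` for `x ≤ y`. -/
noncomputable def transMap (M : PersistenceModule K P) (S : Fin n → Finset P)
    {x y : P} (h : x ≤ y) :
    sliceSpace (M.shift x) S →ₗ[K] sliceSpace (M.shift y) S :=
  LinearMap.pi fun p => (M.map (add_le_add_left h p.2.1)).comp (LinearMap.proj p)

/-- The degree-`i` Jordan rank invariant `rk^i_{M,S}(x,y)`: for `x ≤ y` it is the rank
of the structure map `(M^i_S)_{yx}` of the degree-`i` Jordan module, i.e. the rank of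
the restriction of `⊕_z M_{y+z,x+z}` to `Im(T^i_{M[x],S})`; it is `∞` otherwise. -/
noncomputable def jordanRk (M : PersistenceModule K P) (S : Fin n → Finset P)
    (i : ℕ) (x y : P) : ℕ∞ :=
  if h : x ≤ y then
    (Module.finrank K
      (Submodule.map (transMap M S h) (LinearMap.range (TMap (M.shift x) S ^ i))) : ℕ∞)
  else ⊤

end Shifts

section Functors

variable {P : Type} [PartialOrder P]

/-- A functor from the category of pointwise finite-dimensional persistence modules
over `P` to the category of finite-dimensional `K`-vector spaces. -/
structure PMFunctor (K : Type) [Field K] (P : Type) [PartialOrder P] where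
  obj : (M : PersistenceModule K P) → M.pfd → Type
  [objAcg : ∀ M hM, AddCommGroup (obj M hM)]
  [objMod : ∀ M hM, Module K (obj M hM)]
  objFin : ∀ M hM, FiniteDimensional K (obj M hM)
  fmap : {M N : PersistenceModule K P} → (hM : M.pfd) → (hN : N.pfd) →
      PersistenceHom M N → (obj M hM →ₗ[K] obj N hN)
  fmap_id : ∀ (M : PersistenceModule K P) (hM : M.pfd),
      fmap hM hM (PersistenceHom.id M) = LinearMap.id
  fmap_comp : ∀ {M N L : PersistenceModule K P} (hM : M.pfd) (hN : N.pfd) (hL : L.pfd)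
      (f : PersistenceHom M N) (g : PersistenceHom N L),
      fmap hM hL (g.comp f) = (fmap hN hL g).comp (fmap hM hN f)

attribute [instance] PMFunctor.objAcg PMFunctor.objMod

end Functors

section FRank

variable {P : Type} [AddCommGroup P] [PartialOrder P] [IsOrderedAddMonoid P]

/-- The `F`-rank invariant `rk_{M,F}(x,y)`: for `x ≤ y` it is the rank of
`F(sh^{y-x}_{M[x]}) : F(M[x]) → F(M[x][y-x])`, and `∞` otherwise. -/
noncomputable def frk (F : PMFunctor K P) (M : PersistenceModule K P) (hM : M.pfd)
    (x y : P) : ℕ∞ :=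
  if h : x ≤ y then
    (lrank (F.fmap (hM.shift x) ((hM.shift x).shift (y - x))
      (shMor (M.shift x) (y - x) (sub_nonneg.mpr h))) : ℕ∞)
  else ⊤

end FRank

section RankFunctions

variable {P : Type} [PartialOrder P]

/-- A rank function: `∞` off the order relation, and "erosion monotone". -/
def IsRankFunction (F : P → P → ℕ∞) : Prop :=
  (∀ x y : P, ¬ x ≤ y → F x y = ⊤) ∧
  ∀ x x' y' y : P, x ≤ x' → x' ≤ y' → y' ≤ y → F x y ≤ F x' y'

end RankFunctions

section Distances

variable {R : Type} [CommRing R] [LinearOrder R] [IsStrictOrderedRing R] {d : ℕ}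

/-- The interleaving distance between two persistence modules over `Fin d → R`,
computed in `ℝ≥0∞` via the embedding `toR : R → ℝ`. -/
noncomputable def interleavingDist (toR : R → ℝ)
    (M N : PersistenceModule K (Fin d → R)) : ℝ≥0∞ :=
  sInf {c : ℝ≥0∞ | ∃ (ε : R) (hε : 0 ≤ ε),
    IsInterleaving M N (fun _ => ε) (fun _ => hε) ∧ c = ENNReal.ofReal (toR ε)}

/-- The erosion distance between two `ℕ∞`-valued functions on pairs of points. -/
noncomputable def erosionDist (toR : R → ℝ)
    (F G : (Fin d → R) → (Fin d → R) → ℕ∞) : ℝ≥0∞ :=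
  sInf {c : ℝ≥0∞ | ∃ ε : R, 0 ≤ ε ∧
    (∀ x y : Fin d → R, x ≤ y →
      F (x - fun _ => ε) (y + fun _ => ε) ≤ G x y ∧
      G (x - fun _ => ε) (y + fun _ => ε) ≤ F x y) ∧
    c = ENNReal.ofReal (toR ε)}

/-- The persistence landscape `λ_F(k,x)` of a rank function `F`. -/
noncomputable def landscape (toR : R → ℝ)
    (F : (Fin d → R) → (Fin d → R) → ℕ∞) (k : ℕ) (x : Fin d → R) : ℝ≥0∞ :=
  sSup {c : ℝ≥0∞ | ∃ ε : ℝ, 0 < ε ∧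
    (∀ h : Fin d → R, (∀ i, |toR (h i)| ≤ ε) → (k : ℕ∞) ≤ F (x - h) (x + h)) ∧
    c = ENNReal.ofReal ε}

/-- The sup-distance `‖λ_F - λ_G‖_∞` between the landscapes of `F` and `G`. -/
noncomputable def landscapeDist (toR : R → ℝ)
    (F G : (Fin d → R) → (Fin d → R) → ℕ∞) : ℝ≥0∞ :=
  ⨆ (k : ℕ) (x : Fin d → R),
    max (landscape toR F k x - landscape toR G k x)
      (landscape toR G k x - landscape toR F k x)

end Distances

section Zigzag

variable {P : Type} [PartialOrder P] {n : ℕ}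

/-- The orientation relation of a zigzag: for each `k < n - 1`, exactly one
of the covering pairs `(k, k+1)` (if `ω k = true`) or `(k+1, k)` (if `ω k = false`),
and no other pairs. -/
def zigzagStep (n : ℕ) (ω : ℕ → Bool) (i j : Fin n) : Prop :=
  ((j : ℕ) = (i : ℕ) + 1 ∧ ω (i : ℕ) = true) ∨
  ((i : ℕ) = (j : ℕ) + 1 ∧ ω (j : ℕ) = false)

/-- `P` is a zigzag poset on `{0, …, n-1}` via the labeling `e`, with orientation `ω`:
the order of `P` is the reflexive-transitive closure of the zigzag relation. -/
def IsZigzag (n : ℕ) (ω : ℕ → Bool) (e : P ≃ Fin n) : Prop :=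
  ∀ a b : P, a ≤ b ↔ Relation.ReflTransGen (zigzagStep n ω) (e a) (e b)

/-- The subposet `{i, …, j}` of a labeled poset. -/
def zzInterval (e : P ≃ Fin n) (i j : ℕ) : Set P :=
  {p | i ≤ (e p : ℕ) ∧ (e p : ℕ) ≤ j}

/-- `S⁺_{ij}`: the minimal elements of the subposet `{i, …, j}`. -/
def zzMin (e : P ≃ Fin n) (i j : ℕ) : Set P :=
  {p | p ∈ zzInterval e i j ∧ ∀ q ∈ zzInterval e i j, q ≤ p → q = p}

/-- `S⁻_{ij}`: the maximal elements of the subposet `{i, …, j}`. -/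
def zzMax (e : P ≃ Fin n) (i j : ℕ) : Set P :=
  {p | p ∈ zzInterval e i j ∧ ∀ q ∈ zzInterval e i j, p ≤ q → q = p}

/-- The map `T_{M,S_{ij}} : ⊕_{x ∈ S⁺_{ij}} M_x → ⊕_{y ∈ S⁻_{ij}} M_y`, whose
`(y,x)`-component is `M_{yx}` if `x ≤ y` and `0` otherwise. -/
noncomputable def Tij (e : P ≃ Fin n) (M : PersistenceModule K P) (i j : ℕ) :
    ((x : zzMin e i j) → M.V x.1) →ₗ[K] ((y : zzMax e i j) → M.V y.1) :=
  letI : Fintype P := Fintype.ofEquiv (Fin n) e.symm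
  LinearMap.pi fun y => ∑ x : zzMin e i j,
    if h : x.1 ≤ y.1 then (M.map h).comp (LinearMap.proj x) else 0

end Zigzag

section Jordan

/-- The underlying space of the `K[t]/(t^n)`-module `⊕_{i=1}^n (K[t]/(t^i))^{a_i}`,
where the summand of dimension `(i : Fin n) + 1` occurs with multiplicity `a i`. -/
abbrev jordanSpace (K : Type) (n : ℕ) (a : Fin n → ℕ) : Type :=
  (i : Fin n) → Fin (a i) → Fin ((i : ℕ) + 1) → K

/-- The nilpotent Jordan block of size `m`, i.e. multiplication by `t` on
`K[t]/(t^m)` in the basis `1, t, …, t^{m-1}`. -/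
noncomputable def jordanBlock (K : Type) [Field K] (m : ℕ) :
    (Fin m → K) →ₗ[K] (Fin m → K) :=
  LinearMap.pi fun k =>
    if _ : (k : ℕ) = 0 then 0
    else LinearMap.proj (⟨(k : ℕ) - 1, Nat.lt_of_le_of_lt (Nat.sub_le _ _) k.isLt⟩ : Fin m)

/-- Multiplication by `t` on `⊕_{i=1}^n (K[t]/(t^i))^{a_i}`. -/
noncomputable def jordanOp (K : Type) [Field K] (n : ℕ) (a : Fin n → ℕ) :
    jordanSpace K n a →ₗ[K] jordanSpace K n a :=
  LinearMap.pi fun i => LinearMap.pi fun j =>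
    (jordanBlock K ((i : ℕ) + 1)).comp
      ((LinearMap.proj j :
          (Fin (a i) → Fin ((i : ℕ) + 1) → K) →ₗ[K] (Fin ((i : ℕ) + 1) → K)).comp
        (LinearMap.proj i :
          jordanSpace K n a →ₗ[K] (Fin (a i) → Fin ((i : ℕ) + 1) → K)))

/-- Two pairs (vector space, endomorphism) are isomorphic as `K[t]`-modules. -/
def OpIso {K : Type} [Field K] {V W : Type} [AddCommGroup V] [Module K V]
    [AddCommGroup W] [Module K W] (T : V →ₗ[K] V) (U : W →ₗ[K] W) : Prop :=
  ∃ e : V ≃ₗ[K] W, ∀ v, e (T v) = U (e v)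

/-- The total space `⊕_{k=1}^n I_k` of the interval representation `I_{[a,b]}`
of the equioriented `A_n` quiver (vertices are `1`-based: vertex `k+1` for `k : Fin n`). -/
abbrev intervalSpace (K : Type) (n a b : ℕ) : Type :=
  {k : Fin n // a ≤ (k : ℕ) + 1 ∧ (k : ℕ) + 1 ≤ b} → K

/-- The operator `T` on `⊕_k I_k` given by the arrow maps of `I_{[a,b]}`. -/
noncomputable def intervalShift (K : Type) [Field K] (n a b : ℕ) :
    intervalSpace K n a b →ₗ[K] intervalSpace K n a b :=
  LinearMap.pi fun k =>
    if h : a ≤ (k.1 : ℕ) then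
      LinearMap.proj
        (⟨⟨(k.1 : ℕ) - 1, Nat.lt_of_le_of_lt (Nat.sub_le _ _) k.1.isLt⟩,
          ⟨by have h2 := k.2.2; show a ≤ (k.1 : ℕ) - 1 + 1; omega,
           by have h2 := k.2.2; show (k.1 : ℕ) - 1 + 1 ≤ b; omega⟩⟩ :
          {k : Fin n // a ≤ (k : ℕ) + 1 ∧ (k : ℕ) + 1 ≤ b})
    else 0

end Jordan

section Grid

variable {d : ℕ}

/-- The grid `[0,ℓ₁] × … × [0,ℓ_d] ⊆ ℤ^d`. -/
def gridSet (d : ℕ) (ℓ : Fin d → ℕ) : Set (Fin d → ℤ) :=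
  {x | ∀ k, 0 ≤ x k ∧ x k ≤ (ℓ k : ℤ)}

/-- The norm slice `S_{i+1} = {x ∈ G : x₁ + … + x_d = i}` of the grid. -/
noncomputable def gridSlice (d : ℕ) (ℓ : Fin d → ℕ) (i : ℕ) : Finset (Fin d → ℤ) :=
  (Fintype.piFinset fun k => Finset.Icc (0 : ℤ) (ℓ k)).filter
    fun x => (∑ k, x k) = (i : ℤ)

/-- A persistence module over `ℤ^d` is supported on `G` if it vanishes off `G`. -/
def supportedOn (M : PersistenceModule K (Fin d → ℤ)) (G : Set (Fin d → ℤ)) : Prop :=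
  ∀ z, z ∉ G → Subsingleton (M.V z)

end Grid

section AnQuiver

variable {P : Type} [PartialOrder P] {n : ℕ}

/-- The space `M|_S(k) = ⊕_{x ∈ S_k} M_x` at the `k`-th vertex of the `A_n` quiver. -/
abbrev sliceLevel (M : PersistenceModule K P) (S : Fin n → Finset P) (k : Fin n) :
    Type :=
  (x : {a // a ∈ S k}) → M.V x.1

/-- The arrow map `T_{M,S}(k) : M|_S(k) → M|_S(k+1)`, whose `(y,x)`-component
is `M_{yx}` if `x ≤ y` and `0` otherwise. -/
noncomputable def sliceArrow (M : PersistenceModule K P) (S : Fin n → Finset P)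
    (k : Fin n) (h : (k : ℕ) + 1 < n) :
    sliceLevel M S k →ₗ[K] sliceLevel M S ⟨(k : ℕ) + 1, h⟩ :=
  LinearMap.pi fun y => ∑ x : {a // a ∈ S k},
    if hxy : x.1 ≤ y.1 then (M.map hxy).comp (LinearMap.proj x) else 0

/-- The value at vertex `k` (with `1`-based label `k+1`) of the direct sum of the
interval representations `I_{[(ind j).1, (ind j).2]}`, `j : Fin m`, of the
equioriented `A_n` quiver. -/
abbrev sumIntSpace (K : Type) {m : ℕ} (ind : Fin m → ℕ × ℕ) {n : ℕ} (k : Fin n) :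
    Type :=
  (j : Fin m) → PLift ((ind j).1 ≤ (k : ℕ) + 1 ∧ (k : ℕ) + 1 ≤ (ind j).2) → K

/-- The arrow map from vertex `k` to vertex `k+1` of the direct sum of interval
representations: the identity on each interval passing through both vertices. -/
noncomputable def sumIntArrow (K : Type) [Field K] {m : ℕ} (ind : Fin m → ℕ × ℕ)
    {n : ℕ} (k : Fin n) (h : (k : ℕ) + 1 < n) :
    sumIntSpace K ind k →ₗ[K] sumIntSpace K ind (⟨(k : ℕ) + 1, h⟩ : Fin n) :=
  LinearMap.pi fun j => LinearMap.pi fun _ =>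
    if hk : (ind j).1 ≤ (k : ℕ) + 1 ∧ (k : ℕ) + 1 ≤ (ind j).2 then
      (LinearMap.proj (PLift.up hk) :
          (PLift ((ind j).1 ≤ (k : ℕ) + 1 ∧ (k : ℕ) + 1 ≤ (ind j).2) → K) →ₗ[K] K).comp
        (LinearMap.proj j : sumIntSpace K ind k →ₗ[K]
          (PLift ((ind j).1 ≤ (k : ℕ) + 1 ∧ (k : ℕ) + 1 ≤ (ind j).2) → K))
    else 0

end AnQuiver

/-!
If `ε + a ≤ x ≤ y` and `ε + y ≤ b`, then the shift morphism `sh^{b-a}` of `M[a]` factors as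
`M[a] → N[x] → N[x][y-x] → M[a][b-a]`: the outer maps are the interleaving morphisms followed
by structure maps, the middle one is `sh^{y-x}` of `N[x]`. Applying `F` and using that the rank
of a composite is at most the rank of its middle factor gives `rk_{M,F}(a,b) ≤ rk_{N,F}(x,y)`.
-/

theorem lrank_comp_le_left {V V' V'' : Type} [AddCommGroup V] [Module K V]
    [AddCommGroup V'] [Module K V'] [AddCommGroup V''] [Module K V'']
    [FiniteDimensional K V''] (g : V →ₗ[K] V') (f : V' →ₗ[K] V'') :
    lrank (f.comp g) ≤ lrank f :=
  Submodule.finrank_mono (LinearMap.range_comp_le_range g f)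

theorem lrank_comp_le_right {V V' V'' : Type} [AddCommGroup V] [Module K V]
    [AddCommGroup V'] [Module K V'] [AddCommGroup V''] [Module K V'']
    [FiniteDimensional K V'] (g : V →ₗ[K] V') (f : V' →ₗ[K] V'') :
    lrank (f.comp g) ≤ lrank g := by
  rw [lrank, LinearMap.range_comp]
  exact Submodule.finrank_map_le f _

section Morphisms

variable {P : Type} [PartialOrder P] {M N : PersistenceModule K P}

theorem PersistenceHom.ext_app {f g : PersistenceHom M N} (h : f.app = g.app) : f = g := by
  cases f; cases g; cases h; rfl

theorem PersistenceModule.map_map_apply (M : PersistenceModule K P) {x y z : P}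
    (h₁ : x ≤ y) (h₂ : y ≤ z) (v : M.V x) :
    M.map h₂ (M.map h₁ v) = M.map (h₁.trans h₂) v := by
  rw [← LinearMap.comp_apply, M.map_comp]

end Morphisms

section Interleaving

variable {P : Type} [AddCommGroup P] [PartialOrder P] [IsOrderedAddMonoid P]
  {M N : PersistenceModule K P} {ε : P}

theorem add_add_le_add_of_add_le {a b : P} (h : ε + a ≤ b) (z : P) :
    ε + (a + z) ≤ b + z := by
  rw [← add_assoc]
  exact add_le_add_left h z

theorem add_add_add_le_add_add_of_add_le {a b c d : P} (h : ε + (a + c) ≤ b + d) (z : P) :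
    ε + (a + (c + z)) ≤ b + (d + z) := by
  rw [← add_assoc a, ← add_assoc b]
  exact add_add_le_add_of_add_le h z

theorem IsInterleavingPair.symm {hε : 0 ≤ ε} {f : PersistenceHom M (N.shift ε)}
    {g : PersistenceHom N (M.shift ε)} (hfg : IsInterleavingPair ε hε f g) :
    IsInterleavingPair ε hε g f :=
  ⟨hfg.2, hfg.1⟩

theorem PersistenceHom.map_comp_app_naturality (f : PersistenceHom M (N.shift ε))
    {φ ψ : P → P} (hφ : Monotone φ) (hψ : Monotone ψ) (h : ∀ z, ε + φ z ≤ ψ z)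
    {z w : P} (hzw : z ≤ w) :
    ((N.map (h w)).comp (f.app (φ w))).comp (M.map (hφ hzw)) =
      (N.map (hψ hzw)).comp ((N.map (h z)).comp (f.app (φ z))) := by
  ext v
  have hf : f.app (φ w) (M.map (hφ hzw) v) = (N.shift ε).map (hφ hzw) (f.app (φ z) v) :=
    LinearMap.congr_fun (f.naturality (hφ hzw)) v
  change N.map (h w) (f.app (φ w) (M.map (hφ hzw) v)) =
    N.map (hψ hzw) (N.map (h z) (f.app (φ z) v))
  rw [hf]
  exact (N.map_map_apply _ _ _).trans (N.map_map_apply _ _ _).symm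

def PersistenceHom.toShift (f : PersistenceHom M (N.shift ε)) {a b : P}
    (h : ε + a ≤ b) : PersistenceHom (M.shift a) (N.shift b) where
  app z := (N.map (add_add_le_add_of_add_le h z)).comp (f.app (a + z))
  naturality := f.map_comp_app_naturality (φ := (a + ·)) (ψ := (b + ·))
    (fun _ _ h => add_le_add_right h a) (fun _ _ h => add_le_add_right h b)
    (add_add_le_add_of_add_le h)

def PersistenceHom.toShiftShift (f : PersistenceHom M (N.shift ε)) {a b c d : P}
    (h : ε + (a + c) ≤ b + d) : PersistenceHom ((M.shift a).shift c) ((N.shift b).shift d) where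
  app z := (N.map (add_add_add_le_add_add_of_add_le h z)).comp (f.app (a + (c + z)))
  naturality := f.map_comp_app_naturality (φ := fun z => a + (c + z)) (ψ := fun z => b + (d + z))
    (fun _ _ h => add_le_add_right (add_le_add_right h c) a)
    (fun _ _ h => add_le_add_right (add_le_add_right h d) b)
    (add_add_add_le_add_add_of_add_le h)

theorem PersistenceHom.app_map_apply (g : PersistenceHom N (M.shift ε)) {z w : P}
    (h : z ≤ w) (u : N.V z) :
    g.app w (N.map h u) = M.map (add_le_add_right h ε) (g.app z u) :=
  LinearMap.congr_fun (g.naturality h) u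

theorem IsInterleavingPair.app_app_apply {hε : 0 ≤ ε}
    {f : PersistenceHom M (N.shift ε)} {g : PersistenceHom N (M.shift ε)}
    (hfg : IsInterleavingPair ε hε f g) (z : P) (v : M.V z) :
    g.app (ε + z) (f.app z v) = M.map ((le_add_of_nonneg_left hε).trans
      (add_le_add_right (le_add_of_nonneg_left hε) ε)) v :=
  LinearMap.congr_fun (hfg.1 z) v

theorem IsInterleavingPair.shMor_eq_comp {hε : 0 ≤ ε}
    {f : PersistenceHom M (N.shift ε)} {g : PersistenceHom N (M.shift ε)}
    (hfg : IsInterleavingPair ε hε f g) {a b x y : P} (hax : ε + a ≤ x) (hxy : x ≤ y)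
    (hyb : ε + (x + (y - x)) ≤ a + (b - a)) (hab : a ≤ b) :
    shMor (M.shift a) (b - a) (sub_nonneg.mpr hab) =
      (g.toShiftShift hyb).comp ((shMor (N.shift x) (y - x) (sub_nonneg.mpr hxy)).comp
        (f.toShift hax)) := by
  refine PersistenceHom.ext_app (funext fun z => LinearMap.ext fun (v : M.V (a + z)) => ?_)
  change M.map _ v = M.map _ (g.app _ (N.map _ (N.map _ (f.app (a + z) v))))
  -- retype `f.app (a + z) v : (N.shift ε).V (a + z)` so that the `N.map` lemmas rewrite it
  set u : N.V (ε + (a + z)) := f.app (a + z) v with hu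
  rw [N.map_map_apply, g.app_map_apply, hu, hfg.app_app_apply, M.map_map_apply, M.map_map_apply]

theorem IsInterleavingPair.frk_le {hε : 0 ≤ ε} {f : PersistenceHom M (N.shift ε)}
    {g : PersistenceHom N (M.shift ε)} (hfg : IsInterleavingPair ε hε f g) (F : PMFunctor K P)
    (hM : M.pfd) (hN : N.pfd) {a b x y : P} (hax : ε + a ≤ x) (hxy : x ≤ y) (hyb : ε + y ≤ b) :
    frk F M hM a b ≤ frk F N hN x y := by
  have hab : a ≤ b := (le_add_of_nonneg_left hε).trans (hax.trans (hxy.trans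
    ((le_add_of_nonneg_left hε).trans hyb)))
  have hyb' : ε + (x + (y - x)) ≤ a + (b - a) := by rwa [add_sub_cancel, add_sub_cancel]
  rw [frk, frk, dif_pos hab, dif_pos hxy, hfg.shMor_eq_comp hax hxy hyb' hab,
    F.fmap_comp _ ((hN.shift x).shift (y - x)), F.fmap_comp _ (hN.shift x)]
  have := F.objFin _ ((hN.shift x).shift (y - x))
  exact Nat.cast_le.mpr ((lrank_comp_le_right _ _).trans (lrank_comp_le_left _ _))

theorem IsInterleavingPair.frk_sub_add_le {hε : 0 ≤ ε}
    {f : PersistenceHom M (N.shift ε)} {g : PersistenceHom N (M.shift ε)}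
    (hfg : IsInterleavingPair ε hε f g) (F : PMFunctor K P) (hM : M.pfd) (hN : N.pfd)
    {x y : P} (hxy : x ≤ y) :
    frk F M hM (x - ε) (y + ε) ≤ frk F N hN x y ∧ frk F N hN (x - ε) (y + ε) ≤ frk F M hM x y :=
  ⟨hfg.frk_le F hM hN (add_sub_cancel ε x).le hxy (add_comm ε y).le,
    hfg.symm.frk_le F hN hM (add_sub_cancel ε x).le hxy (add_comm ε y).le⟩

end Interleaving

/-- an `ε`-interleaving erodes the `F`-rank invariants, over `ℤ^d`, `ℝ^d`. -/
theorem statement16 (K : Type) [Field K] (d : ℕ) :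
    (∀ (F : PMFunctor K (Fin d → ℤ)) (M N : PersistenceModule K (Fin d → ℤ))
        (hM : M.pfd) (hN : N.pfd) (ε : ℤ) (hε : 0 ≤ ε)
        (f : PersistenceHom M (N.shift fun _ => ε))
        (g : PersistenceHom N (M.shift fun _ => ε)),
        IsInterleavingPair (fun _ => ε) (fun _ => hε) f g →
        ∀ x y : Fin d → ℤ, x ≤ y →
          frk F M hM (x - fun _ => ε) (y + fun _ => ε) ≤ frk F N hN x y ∧
          frk F N hN (x - fun _ => ε) (y + fun _ => ε) ≤ frk F M hM x y) ∧
    (∀ (F : PMFunctor K (Fin d → ℝ)) (M N : PersistenceModule K (Fin d → ℝ))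
        (hM : M.pfd) (hN : N.pfd) (ε : ℝ) (hε : 0 ≤ ε)
        (f : PersistenceHom M (N.shift fun _ => ε))
        (g : PersistenceHom N (M.shift fun _ => ε)),
        IsInterleavingPair (fun _ => ε) (fun _ => hε) f g →
        ∀ x y : Fin d → ℝ, x ≤ y →
          frk F M hM (x - fun _ => ε) (y + fun _ => ε) ≤ frk F N hN x y ∧
          frk F N hN (x - fun _ => ε) (y + fun _ => ε) ≤ frk F M hM x y) := by
  exact ⟨fun F M N hM hN _ _ _ _ hfg _ _ hxy => hfg.frk_sub_add_le F hM hN hxy,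
    fun F M N hM hN _ _ _ _ hfg _ _ hxy => hfg.frk_sub_add_le F hM hN hxy⟩

end
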